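/- If x is a connected chord diagram with at least two chords, then for any spherical curves P₁, P₂ and any connected sum P₁ # P₂ of them, x(P₁ # P₂) = x(P₁) + x(P₂). Equivalently on Gauss words: if G₁ and G₂ are Gauss words on disjoint letter sets and x is a connected chord diagram with at least two chords, then x([G₁G₂]) = x([G₁]) + x([G₂]). -/

import Mathlib

open scoped Classical

/-- A Gauss word: every letter occurring in it occurs exactly twice. -/
def IsGauss (w : List ℕ) : Prop := ∀ a ∈ w, w.count a = 2

/-- Isomorphism of Gauss words (as lists): a relabeling of letters together with a
cyclic rotation and possibly a reflection. -/
def WordIso (v w : List ℕ) : Prop :=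
  ∃ f : ℕ → ℕ, Set.InjOn f {a | a ∈ v} ∧
    ∃ t : ℕ, w = (v.map f).rotate t ∨ w = ((v.map f).reverse).rotate t

/-- `z` is a sub-Gauss word of `w`: obtained by deleting all occurrences of some
set of letters (i.e. keeping the letters in some finite set `A`). -/
def IsSubword (z w : List ℕ) : Prop :=
  ∃ A : Finset ℕ, z = w.filter (fun a => decide (a ∈ A))

/-- `subCount x G` = number of sub-Gauss words of `G` whose isomorphism class is
that of `x` (sub-Gauss words being parametrized by the subset of retained letters). -/
noncomputable def subCount (x G : List ℕ) : ℕ :=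
  (G.toFinset.powerset.filter
    (fun A => WordIso (G.filter (fun a => decide (a ∈ A))) x)).card

/-- `SubW G D m` : the set of sub-Gauss words of `G` containing exactly `m` of the
distinguished letters in `D`. -/
def SubW (G : List ℕ) (D : Finset ℕ) (m : ℕ) : Set (List ℕ) :=
  {z | ∃ A : Finset ℕ, A ⊆ G.toFinset ∧
    z = G.filter (fun a => decide (a ∈ A)) ∧ (A ∩ D).card = m}

/-- A chord is isolated iff the two occurrences of its letter are cyclically adjacent. -/
def HasIsolatedChord (w : List ℕ) : Prop :=
  ∃ a t, a ∈ w ∧ (w.rotate t).take 2 = [a, a]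

/-- The chord diagram of `g` is a product of two nonempty chord diagrams. -/
def IsProductDiagram (g : List ℕ) : Prop :=
  ∃ v w : List ℕ, v ≠ [] ∧ w ≠ [] ∧ IsGauss v ∧ IsGauss w ∧
    (∀ a ∈ v, a ∉ w) ∧ WordIso g (v ++ w)

/-- The coefficient of the chord diagram (class) of `y` in a formal ℤ-linear
combination of chord diagrams, given as a list of (coefficient, Gauss word) pairs. -/
noncomputable def coef (y : List ℕ) (r : List (ℤ × List ℕ)) : ℤ :=
  (r.map (fun p => p.1 * (if WordIso p.2 y then 1 else 0))).sum

/-!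
A sub-Gauss word of `G₁G₂` that keeps letters of both factors is the product of its two
nonempty parts, which are Gauss words on disjoint letter sets; so its class is not the
connected diagram `x`. Hence every sub-Gauss word of class `x` keeps letters of one factor
only, and it cannot be the empty word, the only one kept from both, since `x` has chords.
-/

theorem WordIso.length_eq {v w : List ℕ} (h : WordIso v w) : w.length = v.length := by
  obtain ⟨f, -, t, h | h⟩ := h <;> simp [h]

theorem wordIso_iff_isRotated {v w : List ℕ} :
    WordIso v w ↔ ∃ f : ℕ → ℕ, Set.InjOn f {a | a ∈ v} ∧
      (v.map f ~r w ∨ (v.map f).reverse ~r w) := by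
  simp only [WordIso, List.IsRotated, eq_comm (a := w), exists_or]

theorem WordIso.symm {v w : List ℕ} (h : WordIso v w) : WordIso w v := by
  obtain ⟨f, hf, hrot⟩ := wordIso_iff_isRotated.mp h
  set g := Function.invFunOn f {a | a ∈ v}
  have hgf_apply : ∀ a ∈ v, g (f a) = a := fun a ha => hf.leftInvOn_invFunOn ha
  have hgf : (v.map f).map g = v := by
    rw [List.map_map]
    conv_rhs => rw [← List.map_id v]
    exact List.map_congr_left hgf_apply
  have himage : ∀ b ∈ w, ∃ a ∈ v, f a = b := by
    intro b hb
    rcases hrot with h | h <;> simpa using h.symm.mem_iff.mp hb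
  have hg : Set.InjOn g {b | b ∈ w} := by
    rintro _ hb₁ _ hb₂ hgb
    obtain ⟨a₁, ha₁, rfl⟩ := himage _ hb₁
    obtain ⟨a₂, ha₂, rfl⟩ := himage _ hb₂
    rw [hgf_apply a₁ ha₁, hgf_apply a₂ ha₂] at hgb
    rw [hgb]
  refine wordIso_iff_isRotated.mpr ⟨g, hg, ?_⟩
  rcases hrot with h | h
  · exact Or.inl (hgf ▸ h.symm.map g)
  · refine Or.inr ?_
    rw [← List.map_reverse, ← hgf]
    simpa using h.symm.reverse.map g

theorem IsGauss.filter {G : List ℕ} (hG : IsGauss G) (p : ℕ → Bool) :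
    IsGauss (G.filter p) := by
  intro a ha
  rw [List.mem_filter] at ha
  rw [List.count_filter ha.2, hG a ha.1]

theorem eq_nil_or_eq_nil_of_wordIso_append {x v w : List ℕ} (hx : ¬ IsProductDiagram x)
    (hv : IsGauss v) (hw : IsGauss w) (hvw : ∀ a ∈ v, a ∉ w) (h : WordIso (v ++ w) x) :
    v = [] ∨ w = [] := by
  by_contra! hne
  exact hx ⟨v, w, hne.1, hne.2, hv, hw, hvw, h.symm⟩

theorem List.filter_mem_eq_nil_iff {G : List ℕ} {A : Finset ℕ} :
    G.filter (· ∈ A) = [] ↔ _root_.Disjoint A G.toFinset := by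
  simp [List.filter_eq_nil_iff, Finset.disjoint_right]

section SubwordCount

variable {G₁ G₂ : List ℕ}

theorem List.filter_append_mem_eq_left (hdisj : G₁.Disjoint G₂) {A : Finset ℕ}
    (hA : A ⊆ G₁.toFinset) : (G₁ ++ G₂).filter (· ∈ A) = G₁.filter (· ∈ A) := by
  have hA₂ : _root_.Disjoint A G₂.toFinset :=
    Finset.disjoint_of_subset_left hA (List.disjoint_toFinset_iff_disjoint.mpr hdisj)
  rw [List.filter_append, List.filter_mem_eq_nil_iff.mpr hA₂, List.append_nil]

theorem List.filter_append_mem_eq_right (hdisj : G₁.Disjoint G₂) {A : Finset ℕ}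
    (hA : A ⊆ G₂.toFinset) : (G₁ ++ G₂).filter (· ∈ A) = G₂.filter (· ∈ A) := by
  have hA₁ : _root_.Disjoint A G₁.toFinset :=
    Finset.disjoint_of_subset_left hA (List.disjoint_toFinset_iff_disjoint.mpr hdisj.symm)
  rw [List.filter_append, List.filter_mem_eq_nil_iff.mpr hA₁, List.nil_append]

theorem card_filter_powerset_append (hdisj : G₁.Disjoint G₂) {P : List ℕ → Prop}
    (hnil : ¬ P [])
    (hsplit : ∀ A : Finset ℕ, P (G₁.filter (· ∈ A) ++ G₂.filter (· ∈ A)) →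
      G₁.filter (· ∈ A) = [] ∨ G₂.filter (· ∈ A) = []) :
    ((G₁ ++ G₂).toFinset.powerset.filter fun A => P ((G₁ ++ G₂).filter (· ∈ A))).card =
      (G₁.toFinset.powerset.filter fun A => P (G₁.filter (· ∈ A))).card +
        (G₂.toFinset.powerset.filter fun A => P (G₂.filter (· ∈ A))).card := by
  rw [← Finset.card_union_of_disjoint]
  · congr 1
    ext A
    simp only [Finset.mem_union, Finset.mem_filter, Finset.mem_powerset, List.toFinset_append]
    constructor
    · rintro ⟨hA, hP⟩
      rw [List.filter_append] at hP
      rcases hsplit A hP with h | h <;> rw [List.filter_mem_eq_nil_iff] at h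
      · have hA₂ := h.left_le_of_le_sup_left hA
        rw [← List.filter_append, List.filter_append_mem_eq_right hdisj hA₂] at hP
        exact Or.inr ⟨hA₂, hP⟩
      · have hA₁ := h.left_le_of_le_sup_right hA
        rw [← List.filter_append, List.filter_append_mem_eq_left hdisj hA₁] at hP
        exact Or.inl ⟨hA₁, hP⟩
    · rintro (⟨hA, hP⟩ | ⟨hA, hP⟩)
      · rw [← List.filter_append_mem_eq_left hdisj hA] at hP
        exact ⟨hA.trans Finset.subset_union_left, hP⟩
      · rw [← List.filter_append_mem_eq_right hdisj hA] at hP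
        exact ⟨hA.trans Finset.subset_union_right, hP⟩
  · refine Finset.disjoint_left.mpr fun A hA₁ hA₂ => ?_
    simp only [Finset.mem_filter, Finset.mem_powerset] at hA₁ hA₂
    have hA : A = ∅ := Finset.disjoint_self_iff_empty A |>.mp <|
      (List.disjoint_toFinset_iff_disjoint.mpr hdisj).mono hA₁.1 hA₂.1
    exact hnil (by simpa [hA] using hA₁.2)

end SubwordCount

theorem connected_count_additive_general (x : List ℕ)
    (hconn : ¬ IsProductDiagram x) (hlen : 4 ≤ x.length)
    (G₁ G₂ : List ℕ) (h1 : IsGauss G₁) (h2 : IsGauss G₂)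
    (hdisj : ∀ a ∈ G₁, a ∉ G₂) :
    subCount x (G₁ ++ G₂) = subCount x G₁ + subCount x G₂ := by
  refine card_filter_powerset_append (P := (WordIso · x)) hdisj
    (fun h => by simp [h.length_eq] at hlen) fun A hA => ?_
  refine eq_nil_or_eq_nil_of_wordIso_append hconn (h1.filter _) (h2.filter _) ?_ hA
  intro a ha₁ ha₂
  exact hdisj a (List.mem_filter.mp ha₁).1 (List.mem_filter.mp ha₂).1

/-- if `x` is a connected chord diagram with at least two chords, then
the count of `x` is additive under connected sum; on Gauss words: for `G₁`, `G₂` on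
disjoint letter sets, `x([G₁G₂]) = x([G₁]) + x([G₂])`. -/
theorem connected_count_additive (x : List ℕ) (hx : IsGauss x)
    (hconn : ¬ IsProductDiagram x) (hlen : 4 ≤ x.length)
    (G₁ G₂ : List ℕ) (h1 : IsGauss G₁) (h2 : IsGauss G₂)
    (hdisj : ∀ a ∈ G₁, a ∉ G₂) :
    subCount x (G₁ ++ G₂) = subCount x G₁ + subCount x G₂ :=
  connected_count_additive_general x hconn hlen G₁ G₂ h1 h2 hdisj
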